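/- Let g be a solution of the Ricci flow on Ω × [0,T) and fix (x,t) ∈ Ω × (0,T). Then, componentwise at (x,t): for every δ > 0, lim_{ε→∞} Γ̃^k_{ij}(ε,δ) = Γ^k_{ij} for 1 ≤ i,j,k ≤ n; lim_{ε→∞} Γ̃^0_{ij}(ε,δ) = 0 for 1 ≤ i,j ≤ n; lim_{ε→∞} Γ̃^k_{i0}(ε,δ) = −R^k_i for 1 ≤ i,k ≤ n; lim_{ε→∞} Γ̃^k_{00}(ε,δ) = −½ g^{kl}∂_l R for 1 ≤ k ≤ n; lim_{ε→∞} Γ̃^0_{i0}(ε,δ) = 0 for 1 ≤ i ≤ n; and lim_{ε→∞} Γ̃^0_{00}(ε,δ) = −1/(2(t+δ)), which tends to 0 as δ → ∞. Consequently, the iterated limit (first ε → ∞, then δ → ∞) of every Christoffel symbol of g̃_{ε,δ} equals the corresponding component of the space-time connection defined by Γ̃^k_{ij} = Γ^k_{ij}, Γ̃^0_{ij} = 0 (0 ≤ i,j ≤ n), Γ̃^k_{i0} = Γ̃^k_{0i} = −R^k_i, Γ̃^k_{00} = −½ g^{kl}∂_l R. -/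

import Mathlib

/- Common local-coordinate framework for the Chow–Chu space-time
   interpretation of Hamilton's Harnack inequality for the Ricci flow. -/

noncomputable section
open scoped BigOperators
open Filter

namespace CC

/-- A time-dependent scalar field on `ℝⁿ × ℝ` (space variable first, then time). -/
abbrev Fld (n : ℕ) := (Fin n → ℝ) → ℝ → ℝ

/-- A time-dependent 2-tensor field (e.g. a metric) in local coordinates. -/
abbrev Met (n : ℕ) := Fin n → Fin n → Fld n

variable {n : ℕ}

/-- Spatial partial derivative `∂ᵢ` of a time-dependent scalar field. -/
def spd (i : Fin n) (u : Fld n) : Fld n :=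
  fun x t => fderiv ℝ (fun y => u y t) x (Pi.single i 1)

/-- Time partial derivative `∂/∂t` of a time-dependent scalar field. -/
def tpd (u : Fld n) : Fld n :=
  fun x t => deriv (fun s => u x s) t

/-- Christoffel symbols `Γ^k_{ij} = ½ g^{kl}(∂ᵢ g_{jl} + ∂ⱼ g_{il} − ∂ₗ g_{ij})`. -/
def Gamma (g ginv : Met n) (k i j : Fin n) : Fld n :=
  fun x t => (1/2) * ∑ l, ginv k l x t *
    (spd i (g j l) x t + spd j (g i l) x t - spd l (g i j) x t)

/-- Riemann curvature `R^l_{ijk} = ∂ᵢΓ^l_{jk} − ∂ⱼΓ^l_{ik} + Γ^m_{jk}Γ^l_{im} − Γ^m_{ik}Γ^l_{jm}`. -/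
def Riem (g ginv : Met n) (l i j k : Fin n) : Fld n :=
  fun x t => spd i (Gamma g ginv l j k) x t - spd j (Gamma g ginv l i k) x t
    + ∑ m, (Gamma g ginv m j k x t * Gamma g ginv l i m x t
          - Gamma g ginv m i k x t * Gamma g ginv l j m x t)

/-- Ricci curvature `R_{jk} = R^p_{pjk}`. -/
def Ric (g ginv : Met n) (j k : Fin n) : Fld n :=
  fun x t => ∑ p, Riem g ginv p p j k x t

/-- Scalar curvature `R = g^{jk} R_{jk}`. -/
def Scal (g ginv : Met n) : Fld n :=
  fun x t => ∑ j, ∑ k, ginv j k x t * Ric g ginv j k x t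

/-- Ricci curvature with raised index, `R^k_i = g^{km} R_{im}`. -/
def RicUp (g ginv : Met n) (k i : Fin n) : Fld n :=
  fun x t => ∑ m, ginv k m x t * Ric g ginv i m x t

/-- Fully lowered Riemann tensor `R_{ijkl} = g_{lm} R^m_{ijk}`. -/
def RiemLow (g ginv : Met n) (i j k l : Fin n) : Fld n :=
  fun x t => ∑ m, g l m x t * Riem g ginv m i j k x t

/-- Covariant derivative of a 1-form: `∇ᵢω_j = ∂ᵢω_j − Γ^p_{ij} ω_p`. -/
def cd1 (g ginv : Met n) (i : Fin n) (ω : Fin n → Fld n) (j : Fin n) : Fld n :=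
  fun x t => spd i (ω j) x t - ∑ p, Gamma g ginv p i j x t * ω p x t

/-- Covariant derivative of a (0,2)-tensor. -/
def cd2 (g ginv : Met n) (i : Fin n) (A : Fin n → Fin n → Fld n) (j k : Fin n) : Fld n :=
  fun x t => spd i (A j k) x t - ∑ p, Gamma g ginv p i j x t * A p k x t
    - ∑ p, Gamma g ginv p i k x t * A j p x t

/-- Covariant derivative of a (1,1)-tensor `T^l_j`:
`∇_a T^l_j = ∂_a T^l_j + Γ^l_{ap} T^p_j − Γ^p_{aj} T^l_p`. -/
def cd11 (g ginv : Met n) (a : Fin n) (T : Fin n → Fin n → Fld n) (l j : Fin n) : Fld n :=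
  fun x t => spd a (T l j) x t + ∑ p, Gamma g ginv l a p x t * T p j x t
    - ∑ p, Gamma g ginv p a j x t * T l p x t

/-- Covariant derivative of a vector field: `∇ᵢV^l = ∂ᵢV^l + Γ^l_{ip} V^p`. -/
def cdVec (g ginv : Met n) (i : Fin n) (V : Fin n → Fld n) (l : Fin n) : Fld n :=
  fun x t => spd i (V l) x t + ∑ p, Gamma g ginv l i p x t * V p x t

/-- Hessian of a scalar: `∇ᵢ∇ⱼu = ∂ᵢ∂ⱼu − Γ^p_{ij}∂_p u`. -/
def hess (g ginv : Met n) (u : Fld n) (i j : Fin n) : Fld n :=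
  fun x t => spd i (spd j u) x t - ∑ p, Gamma g ginv p i j x t * spd p u x t

/-- Gradient (raised differential) of the scalar curvature: `∇^l R = g^{lm}∂_m R`. -/
def gradScal (g ginv : Met n) (l : Fin n) : Fld n :=
  fun x t => ∑ m, ginv l m x t * spd m (Scal g ginv) x t

/-- Rough Laplacian `Δ = g^{pq}∇_p∇_q` on 1-forms. -/
def lap1 (g ginv : Met n) (V : Fin n → Fld n) (j : Fin n) : Fld n :=
  fun x t => ∑ p, ∑ q, ginv p q x t *
    (spd p (cd1 g ginv q V j) x t
     - ∑ m, Gamma g ginv m p q x t * cd1 g ginv m V j x t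
     - ∑ m, Gamma g ginv m p j x t * cd1 g ginv q V m x t)

/-- Rough Laplacian `Δ = g^{pq}∇_p∇_q` on (0,2)-tensors. -/
def lap02 (g ginv : Met n) (A : Fin n → Fin n → Fld n) (i j : Fin n) : Fld n :=
  fun x t => ∑ p, ∑ q, ginv p q x t *
    (spd p (cd2 g ginv q A i j) x t
     - ∑ m, Gamma g ginv m p q x t * cd2 g ginv m A i j x t
     - ∑ m, Gamma g ginv m p i x t * cd2 g ginv q A m j x t
     - ∑ m, Gamma g ginv m p j x t * cd2 g ginv q A i m x t)

/-- Rough Laplacian `Δ = g^{pq}∇_p∇_q` on (1,1)-tensors. -/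
def lap11 (g ginv : Met n) (T : Fin n → Fin n → Fld n) (l i : Fin n) : Fld n :=
  fun x t => ∑ p, ∑ q, ginv p q x t *
    (spd p (cd11 g ginv q T l i) x t
     + ∑ m, Gamma g ginv l p m x t * cd11 g ginv q T m i x t
     - ∑ m, Gamma g ginv m p q x t * cd11 g ginv m T l i x t
     - ∑ m, Gamma g ginv m p i x t * cd11 g ginv q T l m x t)

/-- Laplacian of the scalar curvature `ΔR = g^{ij}(∂ᵢ∂ⱼR − Γ^p_{ij}∂_pR)`. -/
def lapScal (g ginv : Met n) : Fld n :=
  fun x t => ∑ i, ∑ j, ginv i j x t * hess g ginv (Scal g ginv) i j x t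

/-- Squared norm of the Ricci tensor `|Ric|² = g^{ik}g^{jl}R_{ij}R_{kl}`. -/
def normRicSq (g ginv : Met n) : Fld n :=
  fun x t => ∑ i, ∑ j, ∑ k, ∑ l,
    ginv i k x t * ginv j l x t * Ric g ginv i j x t * Ric g ginv k l x t

/-- Hamilton's tensor `P_{ijk} = ∇ᵢR_{jk} − ∇ⱼR_{ik}`. -/
def Pt (g ginv : Met n) (i j k : Fin n) : Fld n :=
  fun x t => cd2 g ginv i (Ric g ginv) j k x t - cd2 g ginv j (Ric g ginv) i k x t

/-- Hamilton's tensor `M_{ij} = ΔR_{ij} − ½∇ᵢ∇ⱼR + 2R_{kijl}R_{kl} − R_{ik}R_{kj}`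
(repeated lower indices contracted with `g^{··}`). -/
def Mt (g ginv : Met n) (i j : Fin n) : Fld n :=
  fun x t => lap02 g ginv (Ric g ginv) i j x t
    - (1/2) * hess g ginv (Scal g ginv) i j x t
    + 2 * ∑ k, ∑ l, ∑ a, ∑ b, ginv k a x t * ginv l b x t *
        RiemLow g ginv k i j l x t * Ric g ginv a b x t
    - ∑ k, ∑ a, ginv k a x t * Ric g ginv i k x t * Ric g ginv a j x t

/-- Hamilton's Harnack quadratic
`Z(U,W) = M_{ij}W_iW_j − 2P_{ijk}U_{ij}W_k + R_{ijkl}U_{ij}U_{lk}`,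
repeated lower indices being contracted with `g^{··}`. -/
def Zharnack (g ginv : Met n) (U : Fin n → Fin n → ℝ) (W : Fin n → ℝ) : Fld n :=
  fun x t =>
    (∑ i, ∑ j, ∑ p, ∑ q, ginv i p x t * ginv j q x t * Mt g ginv i j x t * W p * W q)
    - 2 * (∑ i, ∑ j, ∑ k, ∑ p, ∑ q, ∑ r,
        ginv i p x t * ginv j q x t * ginv k r x t * Pt g ginv i j k x t * U p q * W r)
    + (∑ i, ∑ j, ∑ k, ∑ l, ∑ p, ∑ q, ∑ r, ∑ s,
        ginv i p x t * ginv j q x t * ginv k r x t * ginv l s x t *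
          RiemLow g ginv i j k l x t * U p q * U s r)

/-- `g` (with pointwise inverse `ginv`) is a smooth solution of the Ricci flow
`∂g_{ij}/∂t = −2R_{ij}` on `Ω × [0,T)`. -/
def RicciFlow (Ωs : Set (Fin n → ℝ)) (T : ℝ) (g ginv : Met n) : Prop :=
  IsOpen Ωs ∧ IsConnected Ωs ∧ 0 < T ∧
  (∀ i j, ContDiffOn ℝ (⊤ : ℕ∞) (fun p : (Fin n → ℝ) × ℝ => g i j p.1 p.2)
      (Ωs ×ˢ Set.Ico 0 T)) ∧
  (∀ x ∈ Ωs, ∀ t ∈ Set.Ico (0:ℝ) T,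
    (∀ i j, g i j x t = g j i x t) ∧
    (∀ v : Fin n → ℝ, v ≠ 0 → 0 < ∑ i, ∑ j, g i j x t * v i * v j) ∧
    (∀ i j, ∑ k, g i k x t * ginv k j x t = (if i = j then (1:ℝ) else 0)) ∧
    (∀ i j, tpd (g i j) x t = -2 * Ric g ginv i j x t))

/-! ### Space-time objects -/

/-- A space-time connection on `M̃ = Ω × [0,T)`: the index `0` is time,
the index `i.succ` is the spatial direction `i`. -/
abbrev Con (n : ℕ) := Fin (n+1) → Fin (n+1) → Fin (n+1) → Fld n

/-- Space-time partial derivative: `∂₀ = ∂/∂t` and `∂_{i.succ} = ∂ᵢ`. -/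
def spdT (i : Fin (n+1)) (u : Fld n) : Fld n :=
  Fin.cases (tpd u) (fun j => spd j u) i

/-- Curvature of a space-time connection:
`R̃^l_{ijk} = ∂ᵢΓ̃^l_{jk} − ∂ⱼΓ̃^l_{ik} + Σ_m (Γ̃^m_{jk}Γ̃^l_{im} − Γ̃^m_{ik}Γ̃^l_{jm})`. -/
def RiemT (Γ : Con n) (l i j k : Fin (n+1)) : Fld n :=
  fun x t => spdT i (Γ l j k) x t - spdT j (Γ l i k) x t
    + ∑ m : Fin (n+1), (Γ m j k x t * Γ l i m x t - Γ m i k x t * Γ l j m x t)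

/-- Ricci tensor of a space-time connection: `R̃_{jk} = Σ_p R̃^p_{pjk}`. -/
def RicT (Γ : Con n) (j k : Fin (n+1)) : Fld n :=
  fun x t => ∑ p : Fin (n+1), RiemT Γ p p j k x t

/-- Space-time covariant derivative of a (0,2)-tensor with respect to a connection. -/
def cdT2 (Γ : Con n) (a : Fin (n+1)) (A : Fin (n+1) → Fin (n+1) → Fld n)
    (b c : Fin (n+1)) : Fld n :=
  fun x t => spdT a (A b c) x t - ∑ p : Fin (n+1), Γ p a b x t * A p c x t
    - ∑ p : Fin (n+1), Γ p a c x t * A b p x t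

/-- Space-time covariant derivative of a (1,1)-tensor with respect to a connection. -/
def cdT11 (Γ : Con n) (a : Fin (n+1)) (T : Fin (n+1) → Fin (n+1) → Fld n)
    (l j : Fin (n+1)) : Fld n :=
  fun x t => spdT a (T l j) x t + ∑ p : Fin (n+1), Γ l a p x t * T p j x t
    - ∑ p : Fin (n+1), Γ p a j x t * T l p x t

/-- Time shift of a field by `τ`. -/
def shift (τ : ℝ) (u : Fld n) : Fld n := fun x t => u x (t + τ)

/-- The degenerate inverse metric on space-time (no time shift):
`g̃^{ij} = g^{ij}` for spatial `i,j` and `g̃^{ij} = 0` if `i = 0` or `j = 0`. -/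
def gdegM (ginv : Met n) (i j : Fin (n+1)) : Fld n :=
  Fin.cases (fun _ _ => (0:ℝ))
    (fun i' => Fin.cases (fun _ _ => (0:ℝ)) (fun j' => ginv i' j') j) i

/-- The degenerate inverse metric `g̃_τ` on `M̃_τ`, shifted in time by `τ`. -/
def gdeg (ginv : Met n) (τ : ℝ) (i j : Fin (n+1)) : Fld n :=
  shift τ (gdegM ginv i j)

/-- The Chow–Chu connection `Γ̃_τ` on space-time, defined by (A1)–(A4)
(with time shift `τ`). -/
def GammaA (g ginv : Met n) (τ : ℝ) : Con n :=
  fun k i j =>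
    Fin.cases (fun _ _ => (0:ℝ))
      (fun k' =>
        Fin.cases
          (Fin.cases
            (shift τ (fun x t => -(1/2) * ∑ m, ginv k' m x t * spd m (Scal g ginv) x t))
            (fun j' => shift τ (fun x t => -(RicUp g ginv k' j' x t))) j)
          (fun i' =>
            Fin.cases (shift τ (fun x t => -(RicUp g ginv k' i' x t)))
              (fun j' => shift τ (Gamma g ginv k' i' j')) j) i) k

/-! ### The modified flow -/

/-- `∇ᵢ∇^k f = g^{km} ∇ᵢ∇ₘ f`. -/
def hessUp (g ginv : Met n) (f : Fld n) (i k : Fin n) : Fld n :=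
  fun x t => ∑ m, ginv k m x t * hess g ginv f i m x t

/-- `∇^p f = g^{pq} ∂_q f`. -/
def gradf (ginv : Met n) (f : Fld n) (p : Fin n) : Fld n :=
  fun x t => ∑ q, ginv p q x t * spd q f x t

/-- The potential `−½R + ∂f/∂t − ½|∇f|²`. -/
def Fpot (g ginv : Met n) (f : Fld n) : Fld n :=
  fun x t => -(1/2) * Scal g ginv x t + tpd f x t
    - (1/2) * ∑ p, ∑ q, ginv p q x t * spd p f x t * spd q f x t

/-- The space-time connection `Γ̃` of the modified flow, defined by (D1)–(D4). -/
def GammaD (g ginv : Met n) (f : Fld n) : Con n :=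
  fun k i j =>
    Fin.cases (fun _ _ => (0:ℝ))
      (fun k' =>
        Fin.cases
          (Fin.cases
            (fun x t => ∑ l, ginv k' l x t * spd l (Fpot g ginv f) x t)
            (fun j' => fun x t => -(RicUp g ginv k' j' x t) + hessUp g ginv f j' k' x t) j)
          (fun i' =>
            Fin.cases
              (fun x t => -(RicUp g ginv k' i' x t) + hessUp g ginv f i' k' x t)
              (fun j' => Gamma g ginv k' i' j') j) i) k

/-- Space-time Hessian `∇̃_a∇̃_b f = ∂_a∂_b f − Σ_p Γ̃^p_{ab} ∂_p f` (with `∂₀ = ∂/∂t`). -/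
def hessT (Γ : Con n) (f : Fld n) (a b : Fin (n+1)) : Fld n :=
  fun x t => spdT a (spdT b f) x t - ∑ p : Fin (n+1), Γ p a b x t * spdT p f x t

/-- Space-time Ricci tensor with first index raised by the degenerate metric:
`R̃^k_i = Σ_{p=1}^n g^{kp} R̃_{pi}` for spatial `k`, and `R̃^0_i = 0`. -/
def ricTup (ginv : Met n) (Γ : Con n) (k i : Fin (n+1)) : Fld n :=
  Fin.cases (fun _ _ => (0:ℝ))
    (fun k' => fun x t => ∑ p, ginv k' p x t * RicT Γ p.succ i x t) k

/-- `g` is a smooth solution of the modified Ricci flow with potential `f`: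
`∂g_{ij}/∂t = −2R_{ij} + 2∇ᵢ∇ⱼf` on `Ω × [0,T)`. -/
def ModifiedRicciFlow (Ωs : Set (Fin n → ℝ)) (T : ℝ) (g ginv : Met n) (f : Fld n) : Prop :=
  IsOpen Ωs ∧ IsConnected Ωs ∧ 0 < T ∧
  (∀ i j, ContDiffOn ℝ (⊤ : ℕ∞) (fun p : (Fin n → ℝ) × ℝ => g i j p.1 p.2)
      (Ωs ×ˢ Set.Ico 0 T)) ∧
  ContDiffOn ℝ (⊤ : ℕ∞) (fun p : (Fin n → ℝ) × ℝ => f p.1 p.2) (Ωs ×ˢ Set.Ico 0 T) ∧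
  (∀ x ∈ Ωs, ∀ t ∈ Set.Ico (0:ℝ) T,
    (∀ i j, g i j x t = g j i x t) ∧
    (∀ v : Fin n → ℝ, v ≠ 0 → 0 < ∑ i, ∑ j, g i j x t * v i * v j) ∧
    (∀ i j, ∑ k, g i k x t * ginv k j x t = (if i = j then (1:ℝ) else 0)) ∧
    (∀ i j, tpd (g i j) x t = -2 * Ric g ginv i j x t + 2 * hess g ginv f i j x t))

/-! ### The approximating metrics `g̃_{ε,δ}` -/

/-- The space-time metric `g̃_{ε,δ}`: spatial part `g`, `g̃_{00} = R + ε/(2(t+δ))`,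
mixed components zero. -/
def gE (g ginv : Met n) (ε δ : ℝ) (i j : Fin (n+1)) : Fld n :=
  Fin.cases
    (Fin.cases (fun x t => Scal g ginv x t + ε / (2 * (t + δ)))
      (fun _ => fun _ _ => (0:ℝ)) j)
    (fun i' => Fin.cases (fun _ _ => (0:ℝ)) (fun j' => g i' j') j) i

/-- The (block-diagonal) inverse of `g̃_{ε,δ}`. -/
def gEinv (g ginv : Met n) (ε δ : ℝ) (i j : Fin (n+1)) : Fld n :=
  Fin.cases
    (Fin.cases (fun x t => (Scal g ginv x t + ε / (2 * (t + δ)))⁻¹)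
      (fun _ => fun _ _ => (0:ℝ)) j)
    (fun i' => Fin.cases (fun _ _ => (0:ℝ)) (fun j' => ginv i' j') j) i

/-- The Levi-Civita Christoffel symbols of `g̃_{ε,δ}`:
`Γ̃^k_{ij} = ½ g̃^{kl}(∂ᵢg̃_{jl} + ∂ⱼg̃_{il} − ∂ₗg̃_{ij})`, indices in `0,…,n`. -/
def GammaE (g ginv : Met n) (ε δ : ℝ) : Con n :=
  fun k i j => fun x t => (1/2) * ∑ l : Fin (n+1), gEinv g ginv ε δ k l x t *
    (spdT i (gE g ginv ε δ j l) x t + spdT j (gE g ginv ε δ i l) x t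
      - spdT l (gE g ginv ε δ i j) x t)

end CC

/-! Since `g̃_{ε,δ}` is block diagonal, every Christoffel symbol of it other than `Γ̃^0_{00}` is,
for each `ε`, one of: a spatial symbol of `g`; `½ g^{kl} ∂_t g_{il}`, which the Ricci flow turns
into `-R^k_i`; `-½ g^{kl} ∂_l g̃_{00} = -½ g^{kl} ∂_l R`; or a fixed multiple of
`g̃^{00} = (R + ε/(2(t+δ)))⁻¹`, which tends to `0`. Finally `Γ̃^0_{00} = ½ ∂_t g̃_{00} / g̃_{00}` is a
quotient of two functions affine in `ε`, with slopes `-1/(2(t+δ)²)` and `1/(2(t+δ))`, so it tends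
to `-1/(2(t+δ))`. Splitting `∂_t g̃_{00}` as `∂_t R + ∂_t (ε/(2(t+δ)))` needs `R` to be
differentiable in `t`: `R` is built from derivatives of `g` and of `g⁻¹`, and `g⁻¹` is smooth by
Cramer's rule. -/

section General

open Topology

variable {𝕜 E : Type*} [NontriviallyNormedField 𝕜] [NormedAddCommGroup E] [NormedSpace 𝕜 E]

theorem contDiffOn_matrix_det {m : Type*} [Fintype m] [DecidableEq m] {M : E → Matrix m m 𝕜}
    {s : Set E} {k : WithTop ℕ∞} (hM : ∀ i j, ContDiffOn 𝕜 k (fun y => M y i j) s) :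
    ContDiffOn 𝕜 k (fun y => (M y).det) s := by
  simp only [Matrix.det_apply, Units.smul_def, zsmul_eq_mul]
  exact ContDiffOn.sum fun σ _ => contDiffOn_const.mul (contDiffOn_prod fun i _ => hM (σ i) i)

theorem contDiffOn_matrix_inv_apply {m : Type*} [Fintype m] [DecidableEq m]
    {M : E → Matrix m m 𝕜} {s : Set E} {k : WithTop ℕ∞}
    (hM : ∀ i j, ContDiffOn 𝕜 k (fun y => M y i j) s) (hdet : ∀ y ∈ s, (M y).det ≠ 0) (i j : m) :
    ContDiffOn 𝕜 k (fun y => (M y)⁻¹ i j) s := by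
  have hadj : ContDiffOn 𝕜 k (fun y => (M y).adjugate i j) s := by
    simp only [Matrix.adjugate_apply]
    refine contDiffOn_matrix_det fun a b => ?_
    by_cases hab : a = j
    · simpa [Matrix.updateRow_apply, hab] using contDiffOn_const
    · simpa [Matrix.updateRow_apply, hab] using hM a b
  simp only [Matrix.inv_def, Ring.inverse_eq_inv', Matrix.smul_apply, smul_eq_mul]
  exact ((contDiffOn_matrix_det hM).inv hdet).mul hadj

theorem fderiv_prodMk_left_apply {F G : Type*} [NormedAddCommGroup F] [NormedSpace 𝕜 F]
    [NormedAddCommGroup G] [NormedSpace 𝕜 G] {f : E × F → G} {x : E} {y : F}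
    (hf : DifferentiableAt 𝕜 f (x, y)) (v : E) :
    fderiv 𝕜 (fun x' => f (x', y)) x v = fderiv 𝕜 f (x, y) (v, 0) := by
  have h := (hf.hasFDerivAt.comp x (hasFDerivAt_prodMk_left (𝕜 := 𝕜) x y)).fderiv
  rw [Function.comp_def] at h
  simp [h]

theorem tendsto_add_mul_div_add_mul_atTop (a c : ℝ) {p : ℝ} (hp : p ≠ 0) (q : ℝ) :
    Tendsto (fun ε => (c + ε * q) / (a + ε * p)) atTop (𝓝 (q / p)) := by
  have h := ((tendsto_inv_atTop_zero.const_mul c).add_const q).div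
    ((tendsto_inv_atTop_zero.const_mul a).add_const p) (by simpa using hp)
  simp only [mul_zero, zero_add] at h
  refine h.congr' ((eventually_gt_atTop 0).mono fun ε hε => ?_)
  simp only [Pi.div_apply]
  field_simp

theorem tendsto_limUnder_of_eventually_tendsto {α β X : Type*} [TopologicalSpace X] [T2Space X]
    [Nonempty X] {la : Filter α} {lb : Filter β} [NeBot lb] {F : α → β → X} {L : α → X} {l : X}
    (hF : ∀ᶠ a in la, Tendsto (F a) lb (𝓝 (L a))) (hL : Tendsto L la (𝓝 l)) :
    Tendsto (fun a => limUnder lb (F a)) la (𝓝 l) :=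
  hL.congr' (hF.mono fun _ ha => ha.limUnder_eq.symm)

end General

namespace CC

open Topology Function
open scoped ContDiff

variable {n : ℕ}

section Smoothness

variable {s : Set ((Fin n → ℝ) × ℝ)}

theorem contDiffOn_uncurry_spd (hs : IsOpen s) {u : Fld n} (hu : ContDiffOn ℝ ∞ (uncurry u) s)
    (i : Fin n) : ContDiffOn ℝ ∞ (uncurry (spd i u)) s := by
  have hfd := (hu.fderiv_of_isOpen hs (m := ∞) le_rfl).clm_apply
    (contDiffOn_const (c := ((Pi.single i 1, 0) : (Fin n → ℝ) × ℝ)))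
  refine hfd.congr fun q hq => ?_
  exact fderiv_prodMk_left_apply ((hu.contDiffAt (hs.mem_nhds hq)).differentiableAt (by simp)) _

theorem contDiffOn_uncurry_inverse {g ginv : Met n}
    (hg : ∀ i j, ContDiffOn ℝ ∞ (uncurry (g i j)) s)
    (hinv : ∀ q ∈ s, ∀ i j,
      ∑ l, g i l q.1 q.2 * ginv l j q.1 q.2 = if i = j then (1 : ℝ) else 0)
    (i j : Fin n) : ContDiffOn ℝ ∞ (uncurry (ginv i j)) s := by
  set A : (Fin n → ℝ) × ℝ → Matrix (Fin n) (Fin n) ℝ := fun q => Matrix.of fun a b => g a b q.1 q.2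
  have hA : ∀ q ∈ s, A q * Matrix.of (fun a b => ginv a b q.1 q.2) = 1 := fun q hq => by
    ext a b
    simpa [A, Matrix.mul_apply, Matrix.one_apply] using hinv q hq a b
  refine (contDiffOn_matrix_inv_apply (M := A) hg (fun q hq => ?_) i j).congr fun q hq => ?_
  · exact (Matrix.isUnit_det_of_right_inverse (hA q hq)).ne_zero
  · rw [Matrix.inv_eq_right_inv (hA q hq)]
    rfl

variable {g ginv : Met n} (hs : IsOpen s) (hg : ∀ i j, ContDiffOn ℝ ∞ (uncurry (g i j)) s)
  (hginv : ∀ i j, ContDiffOn ℝ ∞ (uncurry (ginv i j)) s)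
include hs hg hginv

theorem contDiffOn_uncurry_Gamma (k i j : Fin n) :
    ContDiffOn ℝ ∞ (uncurry (Gamma g ginv k i j)) s :=
  contDiffOn_const.mul <| ContDiffOn.sum fun l _ => (hginv k l).mul <|
    ((contDiffOn_uncurry_spd hs (hg j l) i).add (contDiffOn_uncurry_spd hs (hg i l) j)).sub
      (contDiffOn_uncurry_spd hs (hg i j) l)

theorem contDiffOn_uncurry_Scal : ContDiffOn ℝ ∞ (uncurry (Scal g ginv)) s := by
  have hΓ := contDiffOn_uncurry_Gamma hs hg hginv
  have hRiem : ∀ l i j k, ContDiffOn ℝ ∞ (uncurry (Riem g ginv l i j k)) s := fun l i j k =>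
    ((contDiffOn_uncurry_spd hs (hΓ l j k) i).sub (contDiffOn_uncurry_spd hs (hΓ l i k) j)).add <|
      ContDiffOn.sum fun m _ => ((hΓ m j k).mul (hΓ l i m)).sub ((hΓ m i k).mul (hΓ l j m))
  have hRic : ∀ j k, ContDiffOn ℝ ∞ (uncurry (Ric g ginv j k)) s := fun j k =>
    ContDiffOn.sum (s := Finset.univ) fun p _ => hRiem p p j k
  exact ContDiffOn.sum (s := Finset.univ) fun j _ =>
    ContDiffOn.sum (s := Finset.univ) fun k _ => (hginv j k).mul (hRic j k)

end Smoothness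

section RicciFlow

variable {Ωs : Set (Fin n → ℝ)} {T : ℝ} {g ginv : Met n} (hg : RicciFlow Ωs T g ginv)
  {x : Fin n → ℝ} (hx : x ∈ Ωs) {t : ℝ}
include hg hx

theorem RicciFlow.tpd_eq (ht : t ∈ Set.Ico 0 T) (i j : Fin n) :
    tpd (g i j) x t = -2 * Ric g ginv i j x t :=
  (hg.2.2.2.2 x hx t ht).2.2.2 i j

theorem RicciFlow.differentiableAt_Scal (ht : t ∈ Set.Ioo 0 T) :
    DifferentiableAt ℝ (fun s => Scal g ginv x s) t := by
  obtain ⟨hΩ, -, -, hsmooth, hpointwise⟩ := hg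
  have hs : IsOpen (Ωs ×ˢ Set.Ioo 0 T) := hΩ.prod isOpen_Ioo
  have hg' := fun i j => (hsmooth i j).mono (Set.prod_mono_right Set.Ioo_subset_Ico_self)
  have hginv := contDiffOn_uncurry_inverse hg' fun q hq =>
    (hpointwise q.1 hq.1 q.2 (Set.Ioo_subset_Ico_self hq.2)).2.2.1
  have hScal := (contDiffOn_uncurry_Scal hs hg' hginv).contDiffAt
    (hs.mem_nhds (x := (x, t)) ⟨hx, ht⟩)
  exact (hScal.differentiableAt (by simp)).comp t
    ((differentiableAt_const x).prodMk differentiableAt_id)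

end RicciFlow

section Components

variable (g ginv : Met n) (ε δ : ℝ) (x : Fin n → ℝ) (t : ℝ)

@[simp]
theorem gE_zero_zero : gE g ginv ε δ 0 0 x t = Scal g ginv x t + ε / (2 * (t + δ)) := rfl

theorem gE_zero_comm (i : Fin (n + 1)) : gE g ginv ε δ i 0 = gE g ginv ε δ 0 i := by
  cases i using Fin.cases <;> rfl

theorem GammaE_zero_comm (k i : Fin (n + 1)) :
    GammaE g ginv ε δ k i 0 = GammaE g ginv ε δ k 0 i := by
  ext x t
  simp only [GammaE, gE_zero_comm, add_comm]

theorem GammaE_succ_succ_succ (k i j : Fin n) :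
    GammaE g ginv ε δ k.succ i.succ j.succ x t = Gamma g ginv k i j x t := by
  simp [GammaE, gEinv, gE, spdT, Fin.sum_univ_succ, Gamma]

theorem GammaE_zero_succ_succ (i j : Fin n) :
    GammaE g ginv ε δ 0 i.succ j.succ x t =
      -(1 / 2) * (gE g ginv ε δ 0 0 x t)⁻¹ * tpd (g i j) x t := by
  simp [GammaE, gEinv, gE, spdT, Fin.sum_univ_succ, spd, mul_assoc]

theorem GammaE_succ_succ_zero (k i : Fin n) :
    GammaE g ginv ε δ k.succ i.succ 0 x t = 1 / 2 * ∑ l, ginv k l x t * tpd (g i l) x t := by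
  simp [GammaE, gEinv, gE, spdT, Fin.sum_univ_succ, spd]

theorem GammaE_succ_zero_zero (k : Fin n) :
    GammaE g ginv ε δ k.succ 0 0 x t = -(1 / 2) * gradScal g ginv k x t := by
  simp [GammaE, gEinv, gE, spdT, Fin.sum_univ_succ, spd, tpd, fderiv_add_const, gradScal,
    Finset.mul_sum]

theorem GammaE_zero_succ_zero (i : Fin n) :
    GammaE g ginv ε δ 0 i.succ 0 x t =
      1 / 2 * (gE g ginv ε δ 0 0 x t)⁻¹ * spd i (Scal g ginv) x t := by
  simp [GammaE, gEinv, gE, spdT, Fin.sum_univ_succ, spd, fderiv_add_const, mul_assoc]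

theorem GammaE_zero_zero_zero :
    GammaE g ginv ε δ 0 0 0 x t =
      1 / 2 * (gE g ginv ε δ 0 0 x t)⁻¹ * tpd (gE g ginv ε δ 0 0) x t := by
  simp [GammaE, gEinv, gE, spdT, Fin.sum_univ_succ, mul_assoc]

theorem GammaE_succ_succ_zero_eq_neg_RicUp
    (hflow : ∀ i j, tpd (g i j) x t = -2 * Ric g ginv i j x t) (k i : Fin n) :
    GammaE g ginv ε δ k.succ i.succ 0 x t = -RicUp g ginv k i x t := by
  simp only [GammaE_succ_succ_zero, hflow, RicUp, Finset.mul_sum, ← Finset.sum_neg_distrib]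
  exact Finset.sum_congr rfl fun _ _ => by ring

theorem tpd_gE_zero_zero (hR : DifferentiableAt ℝ (fun s => Scal g ginv x s) t)
    (hb : t + δ ≠ 0) :
    tpd (gE g ginv ε δ 0 0) x t = tpd (Scal g ginv) x t + ε * (-1 / (2 * (t + δ) ^ 2)) := by
  have hpot : HasDerivAt (fun s => ε / (2 * (s + δ))) (ε * (-1 / (2 * (t + δ) ^ 2))) t := by
    have h := (((hasDerivAt_id' t).add_const δ).inv hb).const_mul (ε / 2)
    refine (h.congr_deriv (by field_simp)).congr_of_eventuallyEq (.of_forall fun s => ?_)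
    simp only [Pi.inv_apply, div_eq_mul_inv, mul_inv]
    ring
  exact (hR.hasDerivAt.add hpot).deriv

end Components

section Limits

variable {g ginv : Met n} {x : Fin n → ℝ} {t δ : ℝ}

variable (g ginv x) in
theorem tendsto_inv_gE_zero_zero (hb : 0 < t + δ) :
    Tendsto (fun ε => (gE g ginv ε δ 0 0 x t)⁻¹) atTop (𝓝 0) := by
  simp only [gE_zero_zero]
  exact (tendsto_atTop_add_const_left _ _
    (tendsto_id.atTop_div_const (by positivity))).inv_tendsto_atTop

theorem tendsto_GammaE_zero_succ_succ (hb : 0 < t + δ) (i j : Fin n) :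
    Tendsto (fun ε => GammaE g ginv ε δ 0 i.succ j.succ x t) atTop (𝓝 0) := by
  have h := ((tendsto_inv_gE_zero_zero g ginv x hb).const_mul (-(1 / 2))).mul_const
    (tpd (g i j) x t)
  rw [mul_zero, zero_mul] at h
  exact h.congr fun ε => (GammaE_zero_succ_succ g ginv ε δ x t i j).symm

theorem tendsto_GammaE_zero_succ_zero (hb : 0 < t + δ) (i : Fin n) :
    Tendsto (fun ε => GammaE g ginv ε δ 0 i.succ 0 x t) atTop (𝓝 0) := by
  have h := ((tendsto_inv_gE_zero_zero g ginv x hb).const_mul (1 / 2)).mul_const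
    (spd i (Scal g ginv) x t)
  rw [mul_zero, zero_mul] at h
  exact h.congr fun ε => (GammaE_zero_succ_zero g ginv ε δ x t i).symm

theorem tendsto_GammaE_zero_zero_zero (hR : DifferentiableAt ℝ (fun s => Scal g ginv x s) t)
    (hb : 0 < t + δ) :
    Tendsto (fun ε => GammaE g ginv ε δ 0 0 0 x t) atTop (𝓝 (-1 / (2 * (t + δ)))) := by
  have h := (tendsto_add_mul_div_add_mul_atTop (Scal g ginv x t) (tpd (Scal g ginv) x t)
    (p := 1 / (2 * (t + δ))) (by positivity) (-1 / (2 * (t + δ) ^ 2))).const_mul (1 / 2)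
  convert h using 2 with ε
  · rw [GammaE_zero_zero_zero, tpd_gE_zero_zero g ginv ε δ x t hR hb.ne', gE_zero_zero]
    ring
  · field_simp

theorem tendsto_GammaE_GammaA (hflow : ∀ i j, tpd (g i j) x t = -2 * Ric g ginv i j x t)
    (hb : 0 < t + δ) {k i j : Fin (n + 1)} (hkij : ¬(k = 0 ∧ i = 0 ∧ j = 0)) :
    Tendsto (fun ε => GammaE g ginv ε δ k i j x t) atTop (𝓝 (GammaA g ginv 0 k i j x t)) := by
  cases k using Fin.cases with
  | zero =>
    simp only [GammaA, Fin.cases_zero]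
    cases i using Fin.cases <;> cases j using Fin.cases
    · exact absurd ⟨rfl, rfl, rfl⟩ hkij
    · simpa only [← GammaE_zero_comm] using tendsto_GammaE_zero_succ_zero hb _
    · exact tendsto_GammaE_zero_succ_zero hb _
    · exact tendsto_GammaE_zero_succ_succ hb _ _
  | succ k =>
    refine tendsto_const_nhds.congr fun ε => ?_
    cases i using Fin.cases <;> cases j using Fin.cases
    · simp [GammaE_succ_zero_zero, GammaA, shift, gradScal]
    · simp [← GammaE_zero_comm, GammaE_succ_succ_zero_eq_neg_RicUp _ _ _ _ _ _ hflow, GammaA,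
        shift]
    · simp [GammaE_succ_succ_zero_eq_neg_RicUp _ _ _ _ _ _ hflow, GammaA, shift]
    · simp [GammaE_succ_succ_succ, GammaA, shift]

end Limits

end CC
theorem approx_christoffel_limit_general (n : ℕ)
    (Ωs : Set (Fin n → ℝ)) (T : ℝ)
    (g ginv : CC.Met n) (hg : CC.RicciFlow Ωs T g ginv)
    (x : Fin n → ℝ) (hx : x ∈ Ωs) (t : ℝ) (ht : t ∈ Set.Ioo (0:ℝ) T) :
    (∀ δ > (0:ℝ),
      (∀ i j k : Fin n,
        Filter.Tendsto (fun ε => CC.GammaE g ginv ε δ k.succ i.succ j.succ x t)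
          Filter.atTop (nhds (CC.Gamma g ginv k i j x t))) ∧
      (∀ i j : Fin n,
        Filter.Tendsto (fun ε => CC.GammaE g ginv ε δ 0 i.succ j.succ x t)
          Filter.atTop (nhds 0)) ∧
      (∀ i k : Fin n,
        Filter.Tendsto (fun ε => CC.GammaE g ginv ε δ k.succ i.succ 0 x t)
          Filter.atTop (nhds (-(CC.RicUp g ginv k i x t)))) ∧
      (∀ k : Fin n,
        Filter.Tendsto (fun ε => CC.GammaE g ginv ε δ k.succ 0 0 x t)
          Filter.atTop (nhds (-(1/2) * CC.gradScal g ginv k x t))) ∧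
      (∀ i : Fin n,
        Filter.Tendsto (fun ε => CC.GammaE g ginv ε δ 0 i.succ 0 x t)
          Filter.atTop (nhds 0)) ∧
      Filter.Tendsto (fun ε => CC.GammaE g ginv ε δ 0 0 0 x t)
        Filter.atTop (nhds (-1 / (2 * (t + δ))))) ∧
    Filter.Tendsto (fun δ : ℝ => -1 / (2 * (t + δ))) Filter.atTop (nhds 0) ∧
    -- consequently, the iterated limit (first `ε → ∞`, then `δ → ∞`) of every
    -- Christoffel symbol of `g̃_{ε,δ}` is the corresponding component of `Γ̃`
    (∀ k i j : Fin (n+1),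
      Filter.Tendsto
        (fun δ => limUnder Filter.atTop
          (fun ε => CC.GammaE g ginv ε δ k i j x t))
        Filter.atTop (nhds (CC.GammaA g ginv 0 k i j x t))) := by
  have hflow := hg.tpd_eq hx (Set.Ioo_subset_Ico_self ht)
  have hR := hg.differentiableAt_Scal hx ht
  have hb : ∀ δ > (0 : ℝ), 0 < t + δ := fun δ hδ => add_pos ht.1 hδ
  have hδ : Tendsto (fun δ : ℝ => -1 / (2 * (t + δ))) atTop (nhds 0) :=
    tendsto_const_nhds.div_atTop
      ((tendsto_atTop_add_const_left _ t tendsto_id).const_mul_atTop two_pos)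
  refine ⟨fun δ hδ => ⟨fun i j k => ?_, CC.tendsto_GammaE_zero_succ_succ (hb δ hδ),
    fun i k => ?_, fun k => ?_, CC.tendsto_GammaE_zero_succ_zero (hb δ hδ),
    CC.tendsto_GammaE_zero_zero_zero hR (hb δ hδ)⟩, hδ, fun k i j => ?_⟩
  · exact tendsto_const_nhds.congr fun ε => (CC.GammaE_succ_succ_succ g ginv ε δ x t k i j).symm
  · exact tendsto_const_nhds.congr fun ε =>
      (CC.GammaE_succ_succ_zero_eq_neg_RicUp g ginv ε δ x t hflow k i).symm
  · exact tendsto_const_nhds.congr fun ε => (CC.GammaE_succ_zero_zero g ginv ε δ x t k).symm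
  by_cases h000 : k = 0 ∧ i = 0 ∧ j = 0
  · obtain ⟨rfl, rfl, rfl⟩ := h000
    exact tendsto_limUnder_of_eventually_tendsto ((eventually_gt_atTop 0).mono fun δ hδ =>
      CC.tendsto_GammaE_zero_zero_zero hR (hb δ hδ)) hδ
  · exact tendsto_limUnder_of_eventually_tendsto ((eventually_gt_atTop 0).mono fun δ hδ =>
      CC.tendsto_GammaE_GammaA hflow (hb δ hδ) h000) tendsto_const_nhds

/-- Theorem 4.5(1) of Chow–Chu. As `ε → ∞` (and then
`δ → ∞`), the Christoffel symbols of `g̃_{ε,δ}` converge to the components of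
the degenerate space-time connection `Γ̃` defined by (A1)–(A4). -/
theorem approx_christoffel_limit (n : ℕ) (hn : 2 ≤ n)
    (Ωs : Set (Fin n → ℝ)) (T : ℝ)
    (g ginv : CC.Met n) (hg : CC.RicciFlow Ωs T g ginv)
    (x : Fin n → ℝ) (hx : x ∈ Ωs) (t : ℝ) (ht : t ∈ Set.Ioo (0:ℝ) T) :
    (∀ δ > (0:ℝ),
      (∀ i j k : Fin n,
        Filter.Tendsto (fun ε => CC.GammaE g ginv ε δ k.succ i.succ j.succ x t)
          Filter.atTop (nhds (CC.Gamma g ginv k i j x t))) ∧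
      (∀ i j : Fin n,
        Filter.Tendsto (fun ε => CC.GammaE g ginv ε δ 0 i.succ j.succ x t)
          Filter.atTop (nhds 0)) ∧
      (∀ i k : Fin n,
        Filter.Tendsto (fun ε => CC.GammaE g ginv ε δ k.succ i.succ 0 x t)
          Filter.atTop (nhds (-(CC.RicUp g ginv k i x t)))) ∧
      (∀ k : Fin n,
        Filter.Tendsto (fun ε => CC.GammaE g ginv ε δ k.succ 0 0 x t)
          Filter.atTop (nhds (-(1/2) * CC.gradScal g ginv k x t))) ∧
      (∀ i : Fin n,
        Filter.Tendsto (fun ε => CC.GammaE g ginv ε δ 0 i.succ 0 x t)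
          Filter.atTop (nhds 0)) ∧
      Filter.Tendsto (fun ε => CC.GammaE g ginv ε δ 0 0 0 x t)
        Filter.atTop (nhds (-1 / (2 * (t + δ))))) ∧
    Filter.Tendsto (fun δ : ℝ => -1 / (2 * (t + δ))) Filter.atTop (nhds 0) ∧
    -- consequently, the iterated limit (first `ε → ∞`, then `δ → ∞`) of every
    -- Christoffel symbol of `g̃_{ε,δ}` is the corresponding component of `Γ̃`
    (∀ k i j : Fin (n+1),
      Filter.Tendsto
        (fun δ => limUnder Filter.atTop
          (fun ε => CC.GammaE g ginv ε δ k i j x t))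
        Filter.atTop (nhds (CC.GammaA g ginv 0 k i j x t))) :=
  approx_christoffel_limit_general n Ωs T g ginv hg x hx t ht
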